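/- Let F : SL(3,ℝ) → ℂ be continuous, invariant under left translation by SL(3,ℤ), and invariant under right translation by SO(3,ℝ). Then for all k,ℓ ∈ ℤ and all y₁,y₂ > 0, one has [P^{k,0,ℓ}F](a_{y₁,y₂}) = [P^{k,0,−ℓ}F](a_{y₁,y₂}) = [P^{−k,0,ℓ}F](a_{y₁,y₂}). -/

import Mathlib

open scoped Real

noncomputable section

abbrev SL3 := Matrix.SpecialLinearGroup (Fin 3) ℝ

/-- The subspace topology on `SL(3,ℝ)`, induced from the space of matrices. -/
instance : TopologicalSpace SL3 :=
  TopologicalSpace.induced (fun g : SL3 => (g : Matrix (Fin 3) (Fin 3) ℝ)) inferInstance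

/-- The upper-triangular unipotent matrix `u(x,y,z)` in `SL(3,ℝ)`. -/
def uMat (x y z : ℝ) : SL3 :=
  ⟨!![1, x, z; 0, 1, y; 0, 0, 1], by
    simp [Matrix.det_fin_three, Matrix.vecHead, Matrix.vecTail]⟩

/-- The diagonal matrix `a_{y₁,y₂}` as an element of `SL(3,ℝ)` (for `y₁, y₂ > 0`). -/
def aSL (y₁ y₂ : ℝ) (h₁ : 0 < y₁) (h₂ : 0 < y₂) : SL3 :=
  ⟨!![y₁ ^ ((2:ℝ)/3) * y₂ ^ ((1:ℝ)/3), 0, 0;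
     0, y₁ ^ (-(1:ℝ)/3) * y₂ ^ ((1:ℝ)/3), 0;
     0, 0, y₁ ^ (-(1:ℝ)/3) * y₂ ^ (-(2:ℝ)/3)], by
    simp [Matrix.det_fin_three, Matrix.vecHead, Matrix.vecTail]
    have e1 : y₁ ^ ((2:ℝ)/3) * y₁ ^ ((-1)/3 : ℝ) * y₁ ^ ((-1)/3 : ℝ) = 1 := by
      rw [← Real.rpow_add h₁, ← Real.rpow_add h₁]; norm_num
    have e2 : y₂ ^ ((3:ℝ))⁻¹ * y₂ ^ ((3:ℝ))⁻¹ * y₂ ^ ((-2)/3 : ℝ) = 1 := by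
      rw [← Real.rpow_add h₂, ← Real.rpow_add h₂]; norm_num
    linear_combination (y₂ ^ ((3:ℝ))⁻¹ * y₂ ^ ((3:ℝ))⁻¹ * y₂ ^ ((-2)/3 : ℝ)) * e1 + e2⟩

/-- The Fourier coefficient
`[P^{k,0,ℓ}F](g) = ∫₀¹∫₀¹∫₀¹ F(u(x,y,z)g) e^{-2πi(kx+ℓy)} dx dy dz`. -/
def Pk0l (F : SL3 → ℂ) (k l : ℤ) (g : SL3) : ℂ :=
  ∫ z in (0:ℝ)..1, ∫ y in (0:ℝ)..1, ∫ x in (0:ℝ)..1,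
    F (uMat x y z * g) * Complex.exp (-2 * π * Complex.I * (k * x + l * y))


/-!
Write `a = a_{y₁,y₂}`. The half-turns `diag(1,-1,-1)` and `diag(-1,-1,1)` lie in
`SL(3,ℤ) ∩ SO(3)` and commute with `a`, so conjugating by them gives
`F(u(-x,y,-z)a) = F(u(x,y,z)a) = F(u(x,-y,-z)a)`. Left translation by integral unipotents makes
`F(u(x,y,z)a)` periodic in `y` and `z`, but in `x` only up to the shear `z ↦ z + y`; this shear is
absorbed once `z` is averaged over a period. Hence the central average
`∫₀¹ F(u(x,y,z)a) dz` is `ℤ²`-periodic and even in `x` and in `y` separately, and by Fubini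
`P^{k,0,ℓ}F(a)` is its `(k,ℓ)` Fourier coefficient on the torus, which is therefore invariant
under `k ↦ -k` and under `ℓ ↦ -ℓ`.
-/

open Set Function

local notation "SL(3,ℤ)" => Matrix.SpecialLinearGroup (Fin 3) ℤ
local notation "ι" => Matrix.SpecialLinearGroup.map (Int.castRingHom ℝ)

section Integrals

variable {E : Type*} [NormedAddCommGroup E] [NormedSpace ℝ E]

theorem Function.Periodic.intervalIntegral_comp_neg {f : ℝ → E} {T : ℝ} (hf : Periodic f T) :
    ∫ x in (0:ℝ)..T, f (-x) = ∫ x in (0:ℝ)..T, f x := by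
  simpa [intervalIntegral.integral_comp_neg] using hf.intervalIntegral_add_eq (-T) 0

theorem Function.Periodic.intervalIntegral_comp_sub {f : ℝ → E} {T : ℝ} (hf : Periodic f T)
    (c : ℝ) : ∫ x in (0:ℝ)..T, f (x - c) = ∫ x in (0:ℝ)..T, f x := by
  simpa [intervalIntegral.integral_comp_sub_right, sub_eq_neg_add] using
    hf.intervalIntegral_add_eq (-c) 0

theorem intervalIntegral_comm_of_continuous {f : ℝ → ℝ → E} (hf : Continuous (uncurry f))
    (a b c d : ℝ) :
    ∫ x in a..b, ∫ y in c..d, f x y = ∫ y in c..d, ∫ x in a..b, f x y :=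
  MeasureTheory.intervalIntegral_intervalIntegral_swap <|
    (hf.continuousOn.integrableOn_compact (isCompact_uIcc.prod isCompact_uIcc)).mono_set
      (prod_mono uIoc_subset_uIcc uIoc_subset_uIcc)

theorem intervalIntegral_rotate_of_continuous {f : ℝ → ℝ → ℝ → E}
    (hf : Continuous fun p : ℝ × ℝ × ℝ => f p.1 p.2.1 p.2.2) (a b c d e g : ℝ) :
    ∫ z in a..b, ∫ y in c..d, ∫ x in e..g, f x y z
      = ∫ y in c..d, ∫ x in e..g, ∫ z in a..b, f x y z := by
  rw [intervalIntegral_comm_of_continuous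
    (f := fun z y => ∫ x in e..g, f x y z)
    (intervalIntegral.continuous_parametric_intervalIntegral_of_continuous'
      (f := fun (p : ℝ × ℝ) x => f x p.2 p.1)
      (hf.comp (f := fun q : (ℝ × ℝ) × ℝ => (q.2, q.1.2, q.1.1)) (by fun_prop)) _ _)]
  refine intervalIntegral.integral_congr fun y _ => ?_
  exact intervalIntegral_comm_of_continuous (f := fun z x => f x y z)
    (hf.comp (f := fun q : ℝ × ℝ => (q.2, y, q.1)) (by fun_prop)) _ _ _ _

end Integrals

theorem Complex.exp_neg_two_pi_I_mul_add_intCast (t : ℂ) (n : ℤ) :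
    exp (-2 * π * I * (t + n)) = exp (-2 * π * I * t) := by
  rw [mul_add, exp_add, show -2 * π * I * n = (-n : ℤ) * (2 * π * I) by push_cast; ring,
    exp_int_mul_two_pi_mul_I, mul_one]

def torusFourierCoeff (H : ℝ → ℝ → ℂ) (k l : ℤ) : ℂ :=
  ∫ y in (0:ℝ)..1, ∫ x in (0:ℝ)..1,
    H x y * Complex.exp (-2 * π * Complex.I * (k * x + l * y))

theorem torusFourierCoeff_neg_left {H : ℝ → ℝ → ℂ} (hper : ∀ x y, H (x + 1) y = H x y)
    (heven : ∀ x y, H (-x) y = H x y) (k l : ℤ) :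
    torusFourierCoeff H (-k) l = torusFourierCoeff H k l := by
  refine intervalIntegral.integral_congr fun y _ => ?_
  have hper' :
      Periodic (fun x => H x y * Complex.exp (-2 * π * Complex.I * (k * x + l * y))) 1 := by
    intro x
    simp only
    rw [hper, show (k : ℂ) * ↑(x + 1) + l * y = k * x + l * y + k by push_cast; ring,
      Complex.exp_neg_two_pi_I_mul_add_intCast]
  rw [← hper'.intervalIntegral_comp_neg]
  simp only [heven, Int.cast_neg, Complex.ofReal_neg, neg_mul, mul_neg]

theorem torusFourierCoeff_neg_right {H : ℝ → ℝ → ℂ} (hper : ∀ x y, H x (y + 1) = H x y)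
    (heven : ∀ x y, H x (-y) = H x y) (k l : ℤ) :
    torusFourierCoeff H k (-l) = torusFourierCoeff H k l := by
  have hper' : Periodic (fun y => ∫ x in (0:ℝ)..1,
      H x y * Complex.exp (-2 * π * Complex.I * (k * x + l * y))) 1 := by
    intro y
    refine intervalIntegral.integral_congr fun x _ => ?_
    rw [hper, show (k : ℂ) * x + l * ↑(y + 1) = k * x + l * y + l by push_cast; ring,
      Complex.exp_neg_two_pi_I_mul_add_intCast]
  unfold torusFourierCoeff
  rw [← hper'.intervalIntegral_comp_neg]
  simp only [heven, Int.cast_neg, Complex.ofReal_neg, neg_mul, mul_neg]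

theorem uMat_mul_uMat (a b c x y z : ℝ) :
    uMat a b c * uMat x y z = uMat (a + x) (b + y) (c + z + a * y) := by
  ext i j
  simp only [Matrix.SpecialLinearGroup.coe_mul]
  fin_cases i <;> fin_cases j <;>
    simp [uMat, Matrix.mul_apply, Fin.sum_univ_three] <;> ring

def uMatInt (m n p : ℤ) : SL(3,ℤ) :=
  ⟨!![1, m, p; 0, 1, n; 0, 0, 1], by simp [Matrix.det_fin_three]⟩

theorem map_uMatInt (m n p : ℤ) : ι (uMatInt m n p) = uMat m n p := by
  ext i j
  simp only [Matrix.SpecialLinearGroup.map_apply_coe]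
  fin_cases i <;> fin_cases j <;> simp [uMatInt, uMat]

def halfTurn (i : Fin 3) : SL(3,ℤ) :=
  ⟨Matrix.diagonal fun j => if j = i then 1 else -1, by
    fin_cases i <;> simp [Matrix.det_diagonal, Fin.prod_univ_three]⟩

theorem map_halfTurn_mem_specialOrthogonalGroup (i : Fin 3) :
    (ι (halfTurn i) : Matrix (Fin 3) (Fin 3) ℝ) ∈
      Matrix.specialOrthogonalGroup (Fin 3) ℝ := by
  refine Matrix.mem_specialOrthogonalGroup_iff.2 ⟨?_, (ι (halfTurn i)).2⟩
  rw [Matrix.mem_orthogonalGroup_iff]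
  ext j k
  simp only [Matrix.SpecialLinearGroup.map_apply_coe]
  fin_cases i <;> fin_cases j <;> fin_cases k <;>
    simp [halfTurn, Matrix.mul_apply, Matrix.diagonal]

theorem conj_halfTurn_zero_uMat_mul_aSL (x y z y₁ y₂ : ℝ) (h₁ : 0 < y₁)
    (h₂ : 0 < y₂) :
    ι (halfTurn 0) * (uMat x y z * aSL y₁ y₂ h₁ h₂) * ι (halfTurn 0)
      = uMat (-x) y (-z) * aSL y₁ y₂ h₁ h₂ := by
  ext i j
  simp only [Matrix.SpecialLinearGroup.coe_mul, Matrix.SpecialLinearGroup.map_apply_coe]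
  fin_cases i <;> fin_cases j <;>
    simp [halfTurn, uMat, aSL, Matrix.mul_apply, Fin.sum_univ_three, Matrix.diagonal]

theorem conj_halfTurn_two_uMat_mul_aSL (x y z y₁ y₂ : ℝ) (h₁ : 0 < y₁)
    (h₂ : 0 < y₂) :
    ι (halfTurn 2) * (uMat x y z * aSL y₁ y₂ h₁ h₂) * ι (halfTurn 2)
      = uMat x (-y) (-z) * aSL y₁ y₂ h₁ h₂ := by
  ext i j
  simp only [Matrix.SpecialLinearGroup.coe_mul, Matrix.SpecialLinearGroup.map_apply_coe]
  fin_cases i <;> fin_cases j <;>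
    simp [halfTurn, uMat, aSL, Matrix.mul_apply, Fin.sum_univ_three, Matrix.diagonal]

theorem continuous_uMat_mul (g : SL3) :
    Continuous fun p : ℝ × ℝ × ℝ => uMat p.1 p.2.1 p.2.2 * g := by
  refine continuous_induced_rng.2 (continuous_matrix fun i j => ?_)
  simp only [Function.comp_apply, Matrix.SpecialLinearGroup.coe_mul, Matrix.mul_apply,
    Fin.sum_univ_three]
  fin_cases i <;> fin_cases j <;> simp [uMat] <;> fun_prop

def centerAverage (F : SL3 → ℂ) (g : SL3) (x y : ℝ) : ℂ :=
  ∫ z in (0:ℝ)..1, F (uMat x y z * g)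

theorem Pk0l_eq_torusFourierCoeff_centerAverage {F : SL3 → ℂ} (hF : Continuous F) (k l : ℤ)
    (g : SL3) : Pk0l F k l g = torusFourierCoeff (centerAverage F g) k l := by
  rw [Pk0l, intervalIntegral_rotate_of_continuous
    ((hF.comp (continuous_uMat_mul g)).mul (by fun_prop))]
  simp only [torusFourierCoeff, centerAverage, intervalIntegral.integral_mul_const]

section Invariance

variable {F : SL3 → ℂ} (hΓ : ∀ (γ : SL(3,ℤ)) (g : SL3), F (ι γ * g) = F g)
include hΓ

theorem apply_uMat_intCast_add (m n p : ℤ) (x y z : ℝ) (g : SL3) :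
    F (uMat (m + x) (n + y) (p + z + m * y) * g) = F (uMat x y z * g) := by
  rw [← uMat_mul_uMat, mul_assoc, ← map_uMatInt, hΓ]

theorem periodic_apply_uMat_mul (x y : ℝ) (g : SL3) :
    Periodic (fun z => F (uMat x y z * g)) 1 := fun z => by
  simpa [add_comm] using apply_uMat_intCast_add hΓ 0 0 1 x y z g

theorem centerAverage_add_one_left (g : SL3) (x y : ℝ) :
    centerAverage F g (x + 1) y = centerAverage F g x y := by
  have h := fun z => apply_uMat_intCast_add hΓ 1 0 0 x y (z - y) g
  simp only [Int.cast_one, Int.cast_zero, zero_add, one_mul, sub_add_cancel] at h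
  simp only [centerAverage, add_comm x, h,
    (periodic_apply_uMat_mul hΓ x y g).intervalIntegral_comp_sub]

theorem centerAverage_add_one_right (g : SL3) (x y : ℝ) :
    centerAverage F g x (y + 1) = centerAverage F g x y := by
  refine intervalIntegral.integral_congr fun z _ => ?_
  simpa [add_comm] using apply_uMat_intCast_add hΓ 0 1 0 x y z g

variable (hK : ∀ (g k : SL3),
  (k : Matrix (Fin 3) (Fin 3) ℝ) ∈ Matrix.specialOrthogonalGroup (Fin 3) ℝ →
    F (g * k) = F g)
include hK

theorem apply_halfTurn_conj (i : Fin 3) (g : SL3) :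
    F (ι (halfTurn i) * g * ι (halfTurn i)) = F g := by
  rw [hK _ _ (map_halfTurn_mem_specialOrthogonalGroup i), hΓ]

theorem centerAverage_aSL_neg_left (y₁ y₂ : ℝ) (h₁ : 0 < y₁) (h₂ : 0 < y₂) (x y : ℝ) :
    centerAverage F (aSL y₁ y₂ h₁ h₂) (-x) y =
      centerAverage F (aSL y₁ y₂ h₁ h₂) x y := by
  rw [centerAverage, centerAverage,
    ← (periodic_apply_uMat_mul hΓ x y _).intervalIntegral_comp_neg]
  refine intervalIntegral.integral_congr fun z _ => ?_
  rw [← apply_halfTurn_conj hΓ hK 0, conj_halfTurn_zero_uMat_mul_aSL, neg_neg]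

theorem centerAverage_aSL_neg_right (y₁ y₂ : ℝ) (h₁ : 0 < y₁) (h₂ : 0 < y₂) (x y : ℝ) :
    centerAverage F (aSL y₁ y₂ h₁ h₂) x (-y) =
      centerAverage F (aSL y₁ y₂ h₁ h₂) x y := by
  rw [centerAverage, centerAverage,
    ← (periodic_apply_uMat_mul hΓ x y _).intervalIntegral_comp_neg]
  refine intervalIntegral.integral_congr fun z _ => ?_
  rw [← apply_halfTurn_conj hΓ hK 2, conj_halfTurn_two_uMat_mul_aSL, neg_neg]

end Invariance

theorem statement4 (F : SL3 → ℂ)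
    (hcont : Continuous F)
    (hinv : ∀ (γ : Matrix.SpecialLinearGroup (Fin 3) ℤ) (g : SL3),
      F (Matrix.SpecialLinearGroup.map (Int.castRingHom ℝ) γ * g) = F g)
    (hK : ∀ (g k : SL3), (k : Matrix (Fin 3) (Fin 3) ℝ) ∈ Matrix.specialOrthogonalGroup (Fin 3) ℝ →
      F (g * k) = F g)
    (k l : ℤ) (y₁ y₂ : ℝ) (h₁ : 0 < y₁) (h₂ : 0 < y₂) :
    Pk0l F k l (aSL y₁ y₂ h₁ h₂) = Pk0l F k (-l) (aSL y₁ y₂ h₁ h₂) ∧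
    Pk0l F k l (aSL y₁ y₂ h₁ h₂) = Pk0l F (-k) l (aSL y₁ y₂ h₁ h₂) := by
  simp only [Pk0l_eq_torusFourierCoeff_centerAverage hcont]
  exact ⟨(torusFourierCoeff_neg_right (centerAverage_add_one_right hinv _)
      (centerAverage_aSL_neg_right hinv hK y₁ y₂ h₁ h₂) k l).symm,
    (torusFourierCoeff_neg_left (centerAverage_add_one_left hinv _)
      (centerAverage_aSL_neg_left hinv hK y₁ y₂ h₁ h₂) k l).symm⟩
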